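/- For a bivariate Gaussian copula C_θ with correlation θ ∈ (-1,1), there exists a constant M (depending on θ) such that |∂²C_θ/∂u∂v (u,v)| ≤ M · min( 1/(u(1-u)), 1/(v(1-v)) ) for all (u,v) ∈ (0,1)². -/

import Mathlib

open MeasureTheory Set

/-- The standard normal density. -/
noncomputable def stdPhi (x : ℝ) : ℝ := Real.exp (-x^2/2) / Real.sqrt (2*Real.pi)

/-- The standard normal cumulative distribution function. -/
noncomputable def stdCDF (x : ℝ) : ℝ := ∫ t in Set.Iic x, stdPhi t

/-- The density of the centered bivariate Gaussian with unit variances and correlation `θ`. -/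
noncomputable def biDensity (θ x y : ℝ) : ℝ :=
  (1/(2*Real.pi*Real.sqrt (1-θ^2))) * Real.exp (-(x^2 - 2*θ*x*y + y^2)/(2*(1-θ^2)))

/-- The cdf of the centered bivariate Gaussian with unit variances and correlation `θ`. -/
noncomputable def biCDF (θ x y : ℝ) : ℝ := ∫ s in Set.Iic x, ∫ t in Set.Iic y, biDensity θ s t

/-- The bivariate Gaussian copula with correlation `θ`. -/
noncomputable def biCop (θ : ℝ) (Φinv : ℝ → ℝ) (u v : ℝ) : ℝ := biCDF θ (Φinv u) (Φinv v)


/-!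
With `x = Φ⁻¹(u)` and `y = Φ⁻¹(v)`, the inverse function theorem, Fubini and the fundamental
theorem of calculus give `∂²C_θ/∂u∂v = ρ_θ(x, y) / (φ(x) φ(y))`, where `ρ_θ` is the bivariate density.
Since `x² - 2θxy + y² - (1 - θ²) x² = (θx - y)² ≥ 0`, this ratio is at most
`exp(y² / 2) / √(1 - θ²)`, and symmetrically with `x`. The Gaussian tail bound
`1 - Φ(x) ≤ exp(-x² / 2) / 2` for `x ≥ 0` (compare `φ(t)` with `exp(-x²/2) φ(t - x)`) gives
`Φ(x)(1 - Φ(x)) ≤ exp(-x² / 2) / 2`, i.e. `exp(y² / 2) ≤ 1 / (2 v (1 - v))`.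
Hence `M = 1 / (2 √(1 - θ²))` works.
-/
open Real Filter Topology ProbabilityTheory

theorem StrictMono.continuousAt_of_eventually_rightInverse {α β : Type*} [LinearOrder α]
    [TopologicalSpace α] [OrderTopology α] [LinearOrder β] [TopologicalSpace β] [OrderTopology β]
    {f : α → β} {g : β → α} {b : β} (hf : StrictMono f) (hfg : ∀ᶠ w in 𝓝 b, f (g w) = w) :
    ContinuousAt g b := by
  have hb : f (g b) = b := hfg.self_of_nhds
  refine tendsto_order.2 ⟨fun a ha => ?_, fun a ha => ?_⟩
  · filter_upwards [hfg, lt_mem_nhds (hb ▸ hf ha)] with w hw haw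
    exact hf.lt_iff_lt.1 (by rwa [hw])
  · filter_upwards [hfg, gt_mem_nhds (hb ▸ hf ha)] with w hw haw
    exact hf.lt_iff_lt.1 (by rwa [hw])

theorem hasDerivAt_integral_Iic {E : Type*} [NormedAddCommGroup E] [NormedSpace ℝ E]
    [CompleteSpace E] {f : ℝ → E} (hf : Integrable f) (hc : Continuous f) (x : ℝ) :
    HasDerivAt (fun z => ∫ t in Iic z, f t) (f x) x := by
  have hFTC : HasDerivAt (fun z => (∫ t in Iic 0, f t) + ∫ t in (0 : ℝ)..z, f t) (f x) x :=
    (intervalIntegral.integral_hasDerivAt_right hf.intervalIntegrable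
      (hc.stronglyMeasurableAtFilter _ _) hc.continuousAt).const_add _
  refine hFTC.congr_of_eventuallyEq (Eventually.of_forall fun z => ?_)
  dsimp only
  rw [← intervalIntegral.integral_Iic_sub_Iic hf.integrableOn hf.integrableOn, add_sub_cancel]

lemma stdPhi_eq_gaussianPDFReal : stdPhi = gaussianPDFReal 0 1 := by
  ext x
  simp [stdPhi, gaussianPDFReal, div_eq_inv_mul, mul_comm]

lemma stdPhi_pos (x : ℝ) : 0 < stdPhi x := by
  unfold stdPhi; positivity

lemma stdPhi_neg (x : ℝ) : stdPhi (-x) = stdPhi x := by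
  simp [stdPhi]

lemma continuous_stdPhi : Continuous stdPhi := by
  unfold stdPhi; fun_prop

lemma integrable_stdPhi : Integrable stdPhi :=
  stdPhi_eq_gaussianPDFReal ▸ integrable_gaussianPDFReal 0 1

lemma hasDerivAt_stdCDF (x : ℝ) : HasDerivAt stdCDF (stdPhi x) x :=
  hasDerivAt_integral_Iic integrable_stdPhi continuous_stdPhi x

lemma stdCDF_add_integral_Ioi (x : ℝ) : stdCDF x + ∫ t in Ioi x, stdPhi t = 1 := by
  rw [stdCDF, intervalIntegral.integral_Iic_add_Ioi integrable_stdPhi.integrableOn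
    integrable_stdPhi.integrableOn, stdPhi_eq_gaussianPDFReal,
    integral_gaussianPDFReal_eq_one 0 one_ne_zero]

lemma stdCDF_neg (x : ℝ) : stdCDF (-x) = 1 - stdCDF x := by
  rw [eq_sub_iff_add_eq', ← stdCDF_add_integral_Ioi x, add_right_inj, stdCDF,
    ← integral_comp_neg_Ioi]
  simp only [stdPhi_neg]

lemma stdCDF_strictMono : StrictMono stdCDF := by
  intro a b hab
  have hpos : 0 < ∫ t in a..b, stdPhi t :=
    intervalIntegral.intervalIntegral_pos_of_pos integrable_stdPhi.intervalIntegrable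
      stdPhi_pos hab
  rw [← intervalIntegral.integral_Iic_sub_Iic integrable_stdPhi.integrableOn
    integrable_stdPhi.integrableOn] at hpos
  unfold stdCDF; linarith

lemma integral_Ioi_zero_stdPhi : ∫ t in Ioi (0 : ℝ), stdPhi t = 1 / 2 := by
  have h := stdCDF_neg 0
  rw [neg_zero] at h
  linarith [stdCDF_add_integral_Ioi 0]

lemma integral_Ioi_stdPhi_le {x : ℝ} (hx : 0 ≤ x) :
    ∫ t in Ioi x, stdPhi t ≤ exp (-x ^ 2 / 2) / 2 := by
  have hshift : ∫ t in Ioi x, stdPhi (t - x) = 1 / 2 := by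
    have h := (measurePreserving_sub_right volume x).setIntegral_preimage_emb
      (measurableEmbedding_subRight x) stdPhi (Ioi 0)
    rwa [preimage_sub_const_Ioi, zero_add, integral_Ioi_zero_stdPhi] at h
  have hpt : ∀ t ∈ Ioi x, stdPhi t ≤ exp (-x ^ 2 / 2) * stdPhi (t - x) := by
    intro t ht
    -- `t ^ 2 ≥ x ^ 2 + (t - x) ^ 2` for `t ≥ x ≥ 0`
    rw [stdPhi, stdPhi, ← mul_div_assoc, ← exp_add]
    gcongr
    nlinarith [mem_Ioi.1 ht]
  calc ∫ t in Ioi x, stdPhi t ≤ ∫ t in Ioi x, exp (-x ^ 2 / 2) * stdPhi (t - x) :=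
        setIntegral_mono_on integrable_stdPhi.integrableOn
          ((integrable_stdPhi.comp_sub_right x).const_mul _).integrableOn measurableSet_Ioi hpt
    _ = exp (-x ^ 2 / 2) / 2 := by rw [integral_const_mul, hshift]; ring

lemma stdCDF_mul_one_sub_le (x : ℝ) : stdCDF x * (1 - stdCDF x) ≤ exp (-x ^ 2 / 2) / 2 := by
  wlog hx : 0 ≤ x generalizing x
  · have h := this (-x) (by linarith)
    rwa [stdCDF_neg, neg_sq, sub_sub_cancel, mul_comm] at h
  have htail : 1 - stdCDF x = ∫ t in Ioi x, stdPhi t := by linarith [stdCDF_add_integral_Ioi x]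
  have htail_nonneg : 0 ≤ ∫ t in Ioi x, stdPhi t :=
    setIntegral_nonneg measurableSet_Ioi fun t _ => (stdPhi_pos t).le
  calc stdCDF x * (1 - stdCDF x) ≤ 1 - stdCDF x :=
        mul_le_of_le_one_left (by linarith) (by linarith)
    _ ≤ exp (-x ^ 2 / 2) / 2 := htail ▸ integral_Ioi_stdPhi_le hx

lemma hasDerivAt_of_stdCDF_rightInverse {Φinv : ℝ → ℝ}
    (hinv : ∀ w ∈ Ioo (0 : ℝ) 1, stdCDF (Φinv w) = w) {u : ℝ} (hu : u ∈ Ioo (0 : ℝ) 1) :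
    HasDerivAt Φinv (stdPhi (Φinv u))⁻¹ u := by
  have hloc : ∀ᶠ w in 𝓝 u, stdCDF (Φinv w) = w :=
    eventually_of_mem (Ioo_mem_nhds hu.1 hu.2) hinv
  exact (hasDerivAt_stdCDF _).of_local_left_inverse
    (stdCDF_strictMono.continuousAt_of_eventually_rightInverse hloc) (stdPhi_pos _).ne' hloc

lemma exp_sq_div_two_le_of_rightInverse {Φinv : ℝ → ℝ}
    (hinv : ∀ w ∈ Ioo (0 : ℝ) 1, stdCDF (Φinv w) = w) {w : ℝ} (hw : w ∈ Ioo (0 : ℝ) 1) :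
    exp (Φinv w ^ 2 / 2) ≤ 1 / 2 * (1 / (w * (1 - w))) := by
  have hmills := stdCDF_mul_one_sub_le (Φinv w)
  rw [hinv w hw] at hmills
  rw [← div_eq_mul_one_div, le_div_iff₀ (mul_pos hw.1 (sub_pos.2 hw.2))]
  calc exp (Φinv w ^ 2 / 2) * (w * (1 - w))
      ≤ exp (Φinv w ^ 2 / 2) * (exp (-Φinv w ^ 2 / 2) / 2) := by gcongr
    _ = 1 / 2 := by rw [← mul_div_assoc, ← exp_add, neg_div, add_neg_cancel, exp_zero]

section Bivariate

variable {θ : ℝ}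

lemma one_sub_sq_pos_of_abs_lt_one (hθ : |θ| < 1) : 0 < 1 - θ ^ 2 := by
  rwa [sub_pos, sq_lt_one_iff_abs_lt_one]

lemma biDensity_pos (hθ : |θ| < 1) (x y : ℝ) : 0 < biDensity θ x y := by
  have := one_sub_sq_pos_of_abs_lt_one hθ
  unfold biDensity; positivity

lemma biDensity_comm (x y : ℝ) : biDensity θ x y = biDensity θ y x := by
  unfold biDensity; ring_nf

lemma continuous_biDensity : Continuous fun p : ℝ × ℝ => biDensity θ p.1 p.2 := by
  unfold biDensity; fun_prop

lemma biDensity_le_mul_exp_mul_exp (hθ : |θ| < 1) : ∃ K c : ℝ, 0 ≤ K ∧ 0 < c ∧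
    ∀ x y, biDensity θ x y ≤ K * (exp (-c * x ^ 2) * exp (-c * y ^ 2)) := by
  have hs := one_sub_sq_pos_of_abs_lt_one hθ
  refine ⟨1 / (2 * π * √(1 - θ ^ 2)), (1 - |θ|) / (2 * (1 - θ ^ 2)), by positivity,
    div_pos (by linarith) (by linarith), fun x y => ?_⟩
  have hQ : (1 - |θ|) * (x ^ 2 + y ^ 2) ≤ x ^ 2 - 2 * θ * x * y + y ^ 2 := by
    rcases abs_cases θ with ⟨h, _⟩ | ⟨h, _⟩ <;> rw [h] <;>
      nlinarith [sq_nonneg (x - y), sq_nonneg (x + y)]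
  rw [biDensity, ← exp_add]
  gcongr
  calc _ ≤ -((1 - |θ|) * (x ^ 2 + y ^ 2)) / (2 * (1 - θ ^ 2)) :=
        div_le_div_of_nonneg_right (neg_le_neg hQ) (by positivity)
    _ = _ := by ring

lemma integrable_biDensity (hθ : |θ| < 1) :
    Integrable (fun p : ℝ × ℝ => biDensity θ p.1 p.2) (volume.prod volume) := by
  obtain ⟨K, c, -, hc, hle⟩ := biDensity_le_mul_exp_mul_exp hθ
  refine Integrable.mono' (((integrable_exp_neg_mul_sq hc).mul_prod
    (integrable_exp_neg_mul_sq hc)).const_mul K) continuous_biDensity.aestronglyMeasurable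
    (Eventually.of_forall fun p => ?_)
  rw [Real.norm_of_nonneg (biDensity_pos hθ _ _).le]
  exact hle _ _

lemma integrable_biDensity_left (hθ : |θ| < 1) (y : ℝ) : Integrable fun x => biDensity θ x y := by
  obtain ⟨K, c, -, hc, hle⟩ := biDensity_le_mul_exp_mul_exp hθ
  refine Integrable.mono' ((integrable_exp_neg_mul_sq hc).const_mul (K * exp (-c * y ^ 2)))
    (continuous_biDensity.comp (Continuous.prodMk_left y)).aestronglyMeasurable
    (Eventually.of_forall fun x => ?_)
  rw [Real.norm_of_nonneg (biDensity_pos hθ _ _).le]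
  linarith [hle x y]

lemma continuous_integral_Iic_biDensity (hθ : |θ| < 1) (x : ℝ) :
    Continuous fun y => ∫ s in Iic x, biDensity θ s y := by
  obtain ⟨K, c, hK, hc, hle⟩ := biDensity_le_mul_exp_mul_exp hθ
  refine continuous_of_dominated (bound := fun s => K * exp (-c * s ^ 2))
    (fun y => (continuous_biDensity.comp (Continuous.prodMk_left y)).aestronglyMeasurable)
    (fun y => ae_of_all _ fun s => ?_) ((integrable_exp_neg_mul_sq hc).const_mul K).integrableOn
    (ae_of_all _ fun s => continuous_biDensity.comp (Continuous.prodMk_right s))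
  have hy : exp (-c * y ^ 2) ≤ 1 := exp_le_one_iff.2 (by nlinarith [sq_nonneg y])
  rw [Real.norm_of_nonneg (biDensity_pos hθ _ _).le]
  calc biDensity θ s y ≤ K * (exp (-c * s ^ 2) * exp (-c * y ^ 2)) := hle s y
    _ ≤ K * exp (-c * s ^ 2) := by gcongr; exact mul_le_of_le_one_right (exp_pos _).le hy

lemma integrable_integral_Iic_biDensity (hθ : |θ| < 1) (x : ℝ) :
    Integrable fun y => ∫ s in Iic x, biDensity θ s y := by
  have h : Integrable (fun p : ℝ × ℝ => biDensity θ p.1 p.2)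
      ((volume.restrict (Iic x)).prod volume) := by
    rw [Measure.restrict_prod_eq_prod_univ]
    exact (integrable_biDensity hθ).restrict
  exact h.integral_prod_right

lemma biCDF_eq_integral_Iic_integral_Iic (hθ : |θ| < 1) (x y : ℝ) :
    biCDF θ x y = ∫ t in Iic y, ∫ s in Iic x, biDensity θ s t :=
  integral_integral_swap (by rw [Measure.prod_restrict]; exact (integrable_biDensity hθ).restrict)

lemma hasDerivAt_biCDF_right (hθ : |θ| < 1) (x y : ℝ) :
    HasDerivAt (biCDF θ x) (∫ s in Iic x, biDensity θ s y) y := by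
  rw [show biCDF θ x = _ from funext (biCDF_eq_integral_Iic_integral_Iic hθ x)]
  exact hasDerivAt_integral_Iic (integrable_integral_Iic_biDensity hθ x)
    (continuous_integral_Iic_biDensity hθ x) y

lemma hasDerivAt_integral_Iic_biDensity (hθ : |θ| < 1) (x y : ℝ) :
    HasDerivAt (fun z => ∫ s in Iic z, biDensity θ s y) (biDensity θ x y) x :=
  hasDerivAt_integral_Iic (integrable_biDensity_left hθ y)
    (continuous_biDensity.comp (Continuous.prodMk_left y)) x

lemma biDensity_le_exp_div (hθ : |θ| < 1) (x y : ℝ) :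
    biDensity θ x y ≤ exp (-x ^ 2 / 2) / (2 * π * √(1 - θ ^ 2)) := by
  have hs := one_sub_sq_pos_of_abs_lt_one hθ
  rw [biDensity, one_div_mul_eq_div]
  gcongr exp ?_ / _
  rw [div_le_div_iff₀ (by positivity) (by norm_num)]
  nlinarith [sq_nonneg (θ * x - y)]

lemma biDensity_div_stdPhi_mul_le (hθ : |θ| < 1) (x y : ℝ) :
    biDensity θ x y / (stdPhi x * stdPhi y) ≤ exp (y ^ 2 / 2) / √(1 - θ ^ 2) := by
  have hs : 0 < √(1 - θ ^ 2) := sqrt_pos.2 (one_sub_sq_pos_of_abs_lt_one hθ)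
  have hφ : stdPhi x * stdPhi y * exp (y ^ 2 / 2) = exp (-x ^ 2 / 2) / (2 * π) := by
    rw [stdPhi, stdPhi, div_mul_div_comm, mul_self_sqrt (by positivity), div_mul_eq_mul_div,
      mul_assoc, ← exp_add, ← exp_add]
    congr 2
    ring
  rw [div_le_div_iff₀ (mul_pos (stdPhi_pos x) (stdPhi_pos y)) hs]
  calc biDensity θ x y * √(1 - θ ^ 2)
      ≤ exp (-x ^ 2 / 2) / (2 * π * √(1 - θ ^ 2)) * √(1 - θ ^ 2) := by
        gcongr; exact biDensity_le_exp_div hθ x y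
    _ = exp (y ^ 2 / 2) * (stdPhi x * stdPhi y) := by
        rw [mul_comm _ (stdPhi x * stdPhi y), hφ]; field_simp

end Bivariate

section Copula

variable {θ : ℝ} {Φinv : ℝ → ℝ}

lemma deriv_deriv_biCop (hθ : |θ| < 1) (hinv : ∀ w ∈ Ioo (0 : ℝ) 1, stdCDF (Φinv w) = w)
    {u v : ℝ} (hu : u ∈ Ioo (0 : ℝ) 1) (hv : v ∈ Ioo (0 : ℝ) 1) :
    deriv (fun a => deriv (fun b => biCop θ Φinv a b) v) u
      = biDensity θ (Φinv u) (Φinv v) / (stdPhi (Φinv u) * stdPhi (Φinv v)) := by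
  have hinner : (fun a => deriv (fun b => biCop θ Φinv a b) v)
      = fun a => (∫ s in Iic (Φinv a), biDensity θ s (Φinv v)) * (stdPhi (Φinv v))⁻¹ :=
    funext fun a => ((hasDerivAt_biCDF_right hθ _ _).comp v
      (hasDerivAt_of_stdCDF_rightInverse hinv hv)).deriv
  rw [hinner]
  refine (((hasDerivAt_integral_Iic_biDensity hθ _ _).comp u
    (hasDerivAt_of_stdCDF_rightInverse hinv hu)).mul_const _).deriv.trans ?_
  field_simp

lemma biDensity_div_stdPhi_mul_le_of_rightInverse (hθ : |θ| < 1)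
    (hinv : ∀ w ∈ Ioo (0 : ℝ) 1, stdCDF (Φinv w) = w) {v : ℝ} (hv : v ∈ Ioo (0 : ℝ) 1)
    (x : ℝ) : biDensity θ x (Φinv v) / (stdPhi x * stdPhi (Φinv v))
      ≤ 1 / (2 * √(1 - θ ^ 2)) * (1 / (v * (1 - v))) := by
  have hs : 0 < √(1 - θ ^ 2) := sqrt_pos.2 (one_sub_sq_pos_of_abs_lt_one hθ)
  calc _ ≤ exp (Φinv v ^ 2 / 2) / √(1 - θ ^ 2) := biDensity_div_stdPhi_mul_le hθ x _
    _ ≤ 1 / 2 * (1 / (v * (1 - v))) / √(1 - θ ^ 2) := by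
        gcongr; exact exp_sq_div_two_le_of_rightInverse hinv hv
    _ = _ := by field_simp

end Copula

theorem stmt4_general (θ : ℝ) (hθ : θ ∈ Set.Ioo (-1:ℝ) 1)
    (Φinv : ℝ → ℝ)
    (hinv : ∀ w ∈ Set.Ioo (0:ℝ) 1, stdCDF (Φinv w) = w) :
    ∃ M : ℝ, ∀ u ∈ Set.Ioo (0:ℝ) 1, ∀ v ∈ Set.Ioo (0:ℝ) 1,
      |deriv (fun a => deriv (fun b => biCop θ Φinv a b) v) u|
        ≤ M * min (1/(u*(1-u))) (1/(v*(1-v))) := by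
  have hθ' : |θ| < 1 := abs_lt.2 hθ
  refine ⟨1 / (2 * √(1 - θ ^ 2)), fun u hu v hv => ?_⟩
  have hpos := div_pos (biDensity_pos hθ' (Φinv u) (Φinv v))
    (mul_pos (stdPhi_pos (Φinv u)) (stdPhi_pos (Φinv v)))
  rw [deriv_deriv_biCop hθ' hinv hu hv, abs_of_pos hpos,
    mul_min_of_nonneg _ _ (by positivity)]
  refine le_min ?_ (biDensity_div_stdPhi_mul_le_of_rightInverse hθ' hinv hv _)
  rw [biDensity_comm, mul_comm]
  exact biDensity_div_stdPhi_mul_le_of_rightInverse hθ' hinv hu _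

/-- For a bivariate Gaussian copula with `θ ∈ (-1,1)`, there is a constant `M` with
`|∂²C/∂u∂v| ≤ M · min(1/(u(1-u)), 1/(v(1-v)))` on `(0,1)²`. -/
theorem stmt4 (θ : ℝ) (hθ : θ ∈ Set.Ioo (-1:ℝ) 1)
    (Φinv : ℝ → ℝ)
    (hinv : ∀ w ∈ Set.Ioo (0:ℝ) 1, stdCDF (Φinv w) = w)
    (hinv' : ∀ x : ℝ, Φinv (stdCDF x) = x) :
    ∃ M : ℝ, ∀ u ∈ Set.Ioo (0:ℝ) 1, ∀ v ∈ Set.Ioo (0:ℝ) 1,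
      |deriv (fun a => deriv (fun b => biCop θ Φinv a b) v) u|
        ≤ M * min (1/(u*(1-u))) (1/(v*(1-v))) :=
  stmt4_general θ hθ Φinv hinv
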